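/- arXiv:2208.13388 — 2 statements merged into one kernel-verified Lean document; each statement's English description precedes it below -/
import Mathlib

section
/- Let f : ℝ → ℝ be strictly convex and strictly increasing, and define F : ℝ² → ℝ² by F(x,y) = (x, f(y)). Let u = (x_u, y_u), v = (x_v, y_v), w = (x_w, y_w) be points with x_u < x_v, x_u ≤ x_w ≤ x_v, and w ∉ Δ_{uv}. Then: (i) w lies strictly above the segment [u,v] if and only if F(w) lies strictly above the segment [F(u), F(v)]; and (ii) if w lies strictly below the segment [u,v], then F(w) lies strictly below the segment [F(u), F(v)]. -/
/-!
Write `m` for the height of the chord `[u, v]` above `x_w`. If `y_w ≤ m`, monotonicity and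
Jensen give `f y_w ≤ f m ≤` the height of `[F u, F v]`, strictly if `y_w < m`; this gives (ii)
and the backward direction of (i). Conversely, a point strictly above the chord but outside
`Δ_{uv}` lies over a vertical side, or the chord is horizontal, or `y_w ≥ max y_u y_v`; in each
case `y_w` dominates every endpoint height carrying positive weight, and strict monotonicity
alone makes `f y_w` dominate the chord of `F`.
-/

/-- The third corner of the axis-aligned right triangle on `u`, `v`: its x-coordinate is
that of the point of {u,v} with smaller y-coordinate, its y-coordinate that of the point
with larger y-coordinate. -/
noncomputable def triCorner (u v : ℝ × ℝ) : ℝ × ℝ :=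
  if u.2 < v.2 then (u.1, v.2) else (v.1, u.2)

/-- `Δ_{uv}`: the open interior of the axis-aligned right triangle with corners
`u`, `v` and `triCorner u v`; empty if `u` and `v` are horizontally or vertically aligned. -/
noncomputable def triDelta (u v : ℝ × ℝ) : Set (ℝ × ℝ) :=
  if u.1 = v.1 ∨ u.2 = v.2 then ∅
  else interior (convexHull ℝ {u, v, triCorner u v})

open Set

lemma strictConvexOn_univ_of_lt {f : ℝ → ℝ}
    (h : ∀ t : ℝ, 0 < t → t < 1 → ∀ a b : ℝ, a ≠ b →
      f (t * a + (1 - t) * b) < t * f a + (1 - t) * f b) :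
    StrictConvexOn ℝ univ f := by
  refine ⟨convex_univ, fun a _ b _ hab s t hs ht hst => ?_⟩
  obtain rfl : t = 1 - s := by linarith
  exact h s hs (by linarith) a b hab

section WeightedAverage

variable {f : ℝ → ℝ} {p q a b y : ℝ}

lemma ConvexOn.add_mul_map_div_le (hf : ConvexOn ℝ univ f) (hp : 0 ≤ p) (hq : 0 ≤ q)
    (hpq : 0 < p + q) :
    (p + q) * f ((p * a + q * b) / (p + q)) ≤ p * f a + q * f b := by
  have h := hf.2 (mem_univ a) (mem_univ b) (div_nonneg hp hpq.le) (div_nonneg hq hpq.le)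
    (by field_simp)
  simp only [smul_eq_mul] at h
  calc (p + q) * f ((p * a + q * b) / (p + q))
      = (p + q) * f (p / (p + q) * a + q / (p + q) * b) := by congr 2; field_simp
    _ ≤ (p + q) * (p / (p + q) * f a + q / (p + q) * f b) := by gcongr
    _ = p * f a + q * f b := by field_simp

lemma map_mul_le_of_mul_le (hf : ConvexOn ℝ univ f) (hmono : Monotone f) (hp : 0 ≤ p)
    (hq : 0 ≤ q) (hpq : 0 < p + q) (h : y * (p + q) ≤ p * a + q * b) :
    f y * (p + q) ≤ p * f a + q * f b := by
  have hy : f y ≤ f ((p * a + q * b) / (p + q)) := hmono ((le_div_iff₀ hpq).2 h)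
  nlinarith [hf.add_mul_map_div_le (a := a) (b := b) hp hq hpq]

lemma map_mul_lt_of_mul_lt (hf : ConvexOn ℝ univ f) (hmono : StrictMono f) (hp : 0 ≤ p)
    (hq : 0 ≤ q) (hpq : 0 < p + q) (h : y * (p + q) < p * a + q * b) :
    f y * (p + q) < p * f a + q * f b := by
  have hy : f y < f ((p * a + q * b) / (p + q)) := hmono ((lt_div_iff₀ hpq).2 h)
  nlinarith [hf.add_mul_map_div_le (a := a) (b := b) hp hq hpq]

lemma add_mul_lt_map_mul_of_lt (hmono : StrictMono f) (hp : 0 ≤ p) (hq : 0 ≤ q)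
    (ha : p = 0 ∨ a ≤ y) (hb : q = 0 ∨ b ≤ y) (h : p * a + q * b < y * (p + q)) :
    p * f a + q * f b < f y * (p + q) := by
  have hfa : p * f a ≤ p * f y := by
    rcases ha with rfl | ha
    · simp
    · exact mul_le_mul_of_nonneg_left (hmono.monotone ha) hp
  have hfb : q * f b ≤ q * f y := by
    rcases hb with rfl | hb
    · simp
    · exact mul_le_mul_of_nonneg_left (hmono.monotone hb) hq
  have strict : ∀ {r c : ℝ}, 0 ≤ r → r * c < r * y → r * f c < r * f y := fun hr h =>
    mul_lt_mul_of_pos_left (hmono (lt_of_mul_lt_mul_left h hr))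
      (hr.lt_of_ne (by rintro rfl; simp at h))
  rcases lt_or_ge (p * a) (p * y) with hpa | hpa
  · linarith [strict hp hpa]
  · linarith [strict hq (by linarith : q * b < q * y)]

end WeightedAverage

lemma smul_add_smul_add_smul_mem_convexHull {E : Type*} [AddCommGroup E] [Module ℝ E]
    {u v c : E} {α β γ : ℝ} (hα : 0 ≤ α) (hβ : 0 ≤ β) (hγ : 0 ≤ γ) (hsum : α + β + γ = 1) :
    α • u + β • v + γ • c ∈ convexHull ℝ {u, v, c} := by
  have h := (convex_convexHull ℝ ({u, v, c} : Set E)).sum_mem (t := Finset.univ)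
    (w := ![α, β, γ]) (z := ![u, v, c]) (fun i _ => by fin_cases i <;> simpa)
    (by simpa [Fin.sum_univ_three] using hsum)
    (fun i _ => subset_convexHull ℝ _ (by fin_cases i <;> simp))
  simpa [Fin.sum_univ_three, add_assoc] using h

lemma mk_mem_convexHull_triCorner {xu yu xv yv x y : ℝ} (hx : xu < xv) (hy : yu ≠ yv)
    (h1 : xu ≤ x) (h2 : x ≤ xv) (h3 : y ≤ max yu yv)
    (h4 : (xv - x) * yu + (x - xu) * yv ≤ y * (xv - xu)) :
    (x, y) ∈ convexHull ℝ {(xu, yu), (xv, yv), triCorner (xu, yu) (xv, yv)} := by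
  have hd : 0 < xv - xu := sub_pos.2 hx
  rcases hy.lt_or_gt with hlt | hgt
  · have he : 0 < yv - yu := sub_pos.2 hlt
    have hy' : y ≤ yv := by simpa [hlt.le] using h3
    rw [show triCorner (xu, yu) (xv, yv) = (xu, yv) by simp [triCorner, hlt]]
    have key := smul_add_smul_add_smul_mem_convexHull (u := (xu, yu)) (v := (xv, yv))
      (c := (xu, yv)) (div_nonneg (sub_nonneg.2 hy') he.le) (div_nonneg (sub_nonneg.2 h1) hd.le)
      (γ := ((y - yu) * (xv - xu) - (x - xu) * (yv - yu)) / ((yv - yu) * (xv - xu)))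
      (div_nonneg (by linarith) (by positivity)) (by field_simp; ring)
    convert key using 1
    simp only [Prod.smul_mk, smul_eq_mul, Prod.mk_add_mk]
    ext <;> field_simp <;> ring
  · have he : 0 < yu - yv := sub_pos.2 hgt
    have hy' : y ≤ yu := by simpa [hgt.le] using h3
    rw [show triCorner (xu, yu) (xv, yv) = (xv, yu) by simp [triCorner, hgt.not_gt]]
    have key := smul_add_smul_add_smul_mem_convexHull (u := (xu, yu)) (v := (xv, yv))
      (c := (xv, yu)) (div_nonneg (sub_nonneg.2 h2) hd.le) (div_nonneg (sub_nonneg.2 hy') he.le)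
      (γ := ((x - xu) * (yu - yv) - (yu - y) * (xv - xu)) / ((xv - xu) * (yu - yv)))
      (div_nonneg (by linarith) (by positivity)) (by field_simp; ring)
    convert key using 1
    simp only [Prod.smul_mk, smul_eq_mul, Prod.mk_add_mk]
    ext <;> field_simp <;> ring

lemma mk_mem_triDelta {xu yu xv yv xw yw : ℝ} (hx : xu < xv) (hy : yu ≠ yv) (h1 : xu < xw)
    (h2 : xw < xv) (h3 : yw < max yu yv)
    (h4 : (xv - xw) * yu + (xw - xu) * yv < yw * (xv - xu)) :
    (xw, yw) ∈ triDelta (xu, yu) (xv, yv) := by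
  rw [triDelta, if_neg (by simp [hx.ne, hy])]
  let U : Set (ℝ × ℝ) := {w | xu < w.1 ∧ w.1 < xv ∧ w.2 < max yu yv ∧
    (xv - w.1) * yu + (w.1 - xu) * yv < w.2 * (xv - xu)}
  have hU : IsOpen U := by
    refine (isOpen_lt continuous_const continuous_fst).inter <|
      (isOpen_lt continuous_fst continuous_const).inter <|
      (isOpen_lt continuous_snd continuous_const).inter
      (isOpen_lt (f := fun w : ℝ × ℝ => (xv - w.1) * yu + (w.1 - xu) * yv) (by fun_prop)
        (by fun_prop))
  refine interior_maximal (fun w hw => ?_) hU ⟨h1, h2, h3, h4⟩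
  obtain ⟨hw1, hw2, hw3, hw4⟩ := hw
  exact mk_mem_convexHull_triCorner hx hy hw1.le hw2.le hw3.le hw4.le

lemma le_of_above_of_not_mem_triDelta {xu yu xv yv xw yw : ℝ} (hx : xu < xv) (hwl : xu ≤ xw)
    (hwr : xw ≤ xv) (hw : (xw, yw) ∉ triDelta (xu, yu) (xv, yv))
    (habove : yw * (xv - xu) > (xv - xw) * yu + (xw - xu) * yv) :
    (xv - xw = 0 ∨ yu ≤ yw) ∧ (xw - xu = 0 ∨ yv ≤ yw) := by
  rcases hwl.eq_or_lt with rfl | h1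
  · exact ⟨Or.inr (by nlinarith), Or.inl (sub_self _)⟩
  rcases hwr.eq_or_lt with rfl | h2
  · exact ⟨Or.inl (sub_self _), Or.inr (by nlinarith)⟩
  rcases eq_or_ne yu yv with rfl | hy
  · exact ⟨Or.inr (by nlinarith), Or.inr (by nlinarith)⟩
  have hmax : max yu yv ≤ yw := not_lt.1 fun h3 => hw (mk_mem_triDelta hx hy h1 h2 h3 habove)
  exact ⟨Or.inr (le_of_max_le_left hmax), Or.inr (le_of_max_le_right hmax)⟩

/-- Let f be strictly convex and strictly increasing, F(x,y) = (x, f y).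
For u, v, w with x_u < x_v, x_u ≤ x_w ≤ x_v and w ∉ Δ_{uv}:
(i) w is strictly above [u,v] iff F(w) is strictly above [F(u),F(v)];
(ii) if w is strictly below [u,v] then F(w) is strictly below [F(u),F(v)]. -/
theorem stmt_3 (f : ℝ → ℝ)
    (hconv : ∀ t : ℝ, 0 < t → t < 1 → ∀ a b : ℝ, a ≠ b →
      f (t * a + (1 - t) * b) < t * f a + (1 - t) * f b)
    (hmono : StrictMono f)
    (xu yu xv yv xw yw : ℝ) (hx : xu < xv) (hwl : xu ≤ xw) (hwr : xw ≤ xv)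
    (hw : (xw, yw) ∉ triDelta (xu, yu) (xv, yv)) :
    (yw * (xv - xu) > (xv - xw) * yu + (xw - xu) * yv ↔
      f yw * (xv - xu) > (xv - xw) * f yu + (xw - xu) * f yv) ∧
    (yw * (xv - xu) < (xv - xw) * yu + (xw - xu) * yv →
      f yw * (xv - xu) < (xv - xw) * f yu + (xw - xu) * f yv) := by
  have hconvex := (strictConvexOn_univ_of_lt hconv).convexOn
  have hp : 0 ≤ xv - xw := sub_nonneg.2 hwr
  have hq : 0 ≤ xw - xu := sub_nonneg.2 hwl
  have hpq : 0 < (xv - xw) + (xw - xu) := by linarith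
  have hsplit : xv - xu = (xv - xw) + (xw - xu) := by ring
  refine ⟨⟨fun habove => ?_, fun habove => ?_⟩, fun hbelow => ?_⟩
  · obtain ⟨hu, hv⟩ := le_of_above_of_not_mem_triDelta hx hwl hwr hw habove
    rw [hsplit] at habove ⊢
    exact add_mul_lt_map_mul_of_lt hmono hp hq hu hv habove
  · rw [hsplit] at habove ⊢
    by_contra hnot
    exact (map_mul_le_of_mul_le hconvex hmono.monotone hp hq hpq (not_lt.1 hnot)).not_gt habove
  · rw [hsplit] at hbelow ⊢
    exact map_mul_lt_of_mul_lt hconvex hmono hp hq hpq hbelow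
end

section
/- Let V be a finite set, let p : V → ℤ × ℤ be injective (with p(v) viewed as a point of ℝ²), and let E be a set of unordered pairs of distinct elements of V (the edges). Assume the straight-line drawing p is planar: for every edge {u,v} ∈ E, the closed segment [p(u), p(v)] contains no point p(w) with w ∉ {u,v}; and for any two distinct edges e1 = {u,v} and e2 = {a,b}, the closed segments [p(u),p(v)] and [p(a),p(b)] are disjoint if e1 and e2 share no vertex, and intersect exactly in the point p(z) if they share exactly the vertex z. Assume further that p is liftable: for every edge {u,v} ∈ E and every w ∈ V, p(w) ∉ Δ_{p(u)p(v)}. Let f : ℝ → ℝ be strictly convex and strictly increasing, and define q : V → ℝ² by q(v) = (x-coordinate of p(v), f(y-coordinate of p(v))). Then the drawing q satisfies the same planarity conditions: for every edge {u,v} ∈ E the closed segment [q(u), q(v)] contains no q(w) with w ∉ {u,v}, and for any two distinct edges, their closed segments under q are disjoint if the edges share no vertex, and intersect exactly in the image of the shared vertex if they share exactly one vertex. -/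
open Set

lemma Set.mem_uIoo_of_mem_uIcc {α : Type*} [LinearOrder α] {a b x : α} (hx : x ∈ uIcc a b)
    (ha : x ≠ a) (hb : x ≠ b) : x ∈ uIoo a b := by
  rw [uIoo_eq_union]
  rcases mem_uIcc.1 hx with ⟨h₁, h₂⟩ | ⟨h₁, h₂⟩
  exacts [Or.inl ⟨h₁.lt_of_ne ha.symm, h₂.lt_of_ne hb⟩,
    Or.inr ⟨h₁.lt_of_ne hb.symm, h₂.lt_of_ne ha⟩]

lemma Set.left_notMem_uIoo_of_mem_uIcc {α : Type*} [LinearOrder α] {a b x y : α}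
    (hx : x ∈ uIcc a b) (hy : y ∈ uIcc a b) : a ∉ uIoo x y := by
  rintro ⟨h₁, h₂⟩
  rcases le_total a b with h | h
  · rw [uIcc_of_le h] at hx hy
    exact (min_lt_iff.1 h₁).elim hx.1.not_gt hy.1.not_gt
  · rw [uIcc_of_ge h] at hx hy
    exact (lt_max_iff.1 h₂).elim hx.2.not_gt hy.2.not_gt

lemma mem_segment_of_mem_pair {E : Type*} [AddCommGroup E] [Module ℝ E] {A B V : E}
    (hV : V ∈ ({A, B} : Set E)) : V ∈ segment ℝ A B := by
  rcases hV with rfl | rfl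
  exacts [left_mem_segment ℝ _ _, right_mem_segment ℝ _ _]

/-- The height at abscissa `x` of the line through `A` and `B`; when `A.1 = B.1` the division
by zero makes it the constant `A.2`. -/
noncomputable def lineAt (A B : ℝ × ℝ) (x : ℝ) : ℝ :=
  A.2 + (x - A.1) * ((B.2 - A.2) / (B.1 - A.1))

section lineAt

variable {A B V : ℝ × ℝ}

@[simp]
lemma lineAt_fst_left : lineAt A B A.1 = A.2 := by simp [lineAt]

lemma lineAt_fst_right (h : A.1 ≠ B.1) : lineAt A B B.1 = B.2 := by
  have : B.1 - A.1 ≠ 0 := sub_ne_zero.2 h.symm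
  simp only [lineAt]; field_simp; ring

lemma lineAt_fst_of_mem (h : A.1 ≠ B.1) (hV : V ∈ ({A, B} : Set (ℝ × ℝ))) :
    lineAt A B V.1 = V.2 := by
  rcases hV with rfl | rfl
  exacts [lineAt_fst_left, lineAt_fst_right h]

lemma lineAt_comm (h : A.1 ≠ B.1) : lineAt A B = lineAt B A := by
  have : B.1 - A.1 ≠ 0 := sub_ne_zero.2 h.symm
  have : A.1 - B.1 ≠ 0 := sub_ne_zero.2 h
  ext x; simp only [lineAt]; field_simp; ring

lemma lineAt_of_snd_eq (h : A.2 = B.2) (x : ℝ) : lineAt A B x = A.2 := by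
  simp [lineAt, h]

lemma lineAt_combo (h : A.1 ≠ B.1) {a b : ℝ} (hab : a + b = 1) :
    lineAt A B (a * A.1 + b * B.1) = a * A.2 + b * B.2 := by
  have : B.1 - A.1 ≠ 0 := sub_ne_zero.2 h.symm
  obtain rfl : a = 1 - b := by linarith
  simp only [lineAt]; field_simp; ring

lemma sub_mul_lineAt (A B : ℝ × ℝ) (l x r : ℝ) :
    (r - l) * lineAt A B x = (r - x) * lineAt A B l + (x - l) * lineAt A B r := by
  simp only [lineAt]; ring

@[fun_prop]
lemma continuous_lineAt (A B : ℝ × ℝ) : Continuous (lineAt A B) := by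
  unfold lineAt; fun_prop

lemma mem_segment_iff_lineAt (h : A.1 ≠ B.1) :
    V ∈ segment ℝ A B ↔ V.1 ∈ uIcc A.1 B.1 ∧ V.2 = lineAt A B V.1 := by
  rw [← segment_eq_uIcc]
  constructor
  · rintro ⟨a, b, ha, hb, hab, rfl⟩
    refine ⟨⟨a, b, ha, hb, hab, rfl⟩, ?_⟩
    simp only [Prod.fst_add, Prod.snd_add, Prod.smul_fst, Prod.smul_snd, smul_eq_mul]
    rw [lineAt_combo h hab]
  · rintro ⟨⟨a, b, ha, hb, hab, hx⟩, hy⟩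
    refine ⟨a, b, ha, hb, hab, Prod.ext ?_ ?_⟩
    · simpa using hx
    · simp only [smul_eq_mul] at hx
      simp [hy, ← hx, lineAt_combo h hab]

lemma mem_segment_iff_of_fst_eq (h : A.1 = B.1) :
    V ∈ segment ℝ A B ↔ V.1 = A.1 ∧ V.2 ∈ uIcc A.2 B.2 := by
  rw [← segment_eq_uIcc, show B = (A.1, B.2) from Prod.ext h.symm rfl,
    ← Prod.image_mk_segment_right]
  constructor
  · rintro ⟨y, hy, rfl⟩; exact ⟨rfl, hy⟩
  · rintro ⟨h₁, h₂⟩; exact ⟨V.2, h₂, Prod.ext h₁.symm rfl⟩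

lemma lineAt_lt_max (h : A.1 ≠ B.1) (hy : A.2 ≠ B.2) {x : ℝ} (hx : x ∈ uIoo A.1 B.1) :
    lineAt A B x < max A.2 B.2 := by
  rw [uIoo, ← openSegment_eq_Ioo' h] at hx
  obtain ⟨a, b, ha, hb, hab, rfl⟩ := hx
  rw [smul_eq_mul, smul_eq_mul, lineAt_combo h hab]
  exact ((openSegment_eq_Ioo' hy).subset ⟨a, b, ha, hb, hab, rfl⟩).2

lemma triDelta_comm (A B : ℝ × ℝ) : triDelta A B = triDelta B A := by
  unfold triDelta
  by_cases h : A.1 = B.1 ∨ A.2 = B.2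
  · rw [if_pos h, if_pos (by tauto)]
  · have hc : triCorner A B = triCorner B A := by
      unfold triCorner
      rcases Ne.lt_or_gt (not_or.1 h).2 with h' | h'
      · rw [if_pos h', if_neg (lt_asymm h')]
      · rw [if_neg (lt_asymm h'), if_pos h']
    rw [if_neg h, if_neg (by tauto), hc, insert_comm]

lemma mem_triDelta_of_lineAt_lt (h : A.1 ≠ B.1) (hy : A.2 ≠ B.2) (hV : V.1 ∈ uIoo A.1 B.1)
    (h₁ : lineAt A B V.1 < V.2) (h₂ : V.2 < max A.2 B.2) : V ∈ triDelta A B := by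
  wlog hlt : A.2 < B.2 generalizing A B
  · rw [triDelta_comm]
    rw [uIoo_comm] at hV; rw [lineAt_comm h] at h₁; rw [max_comm] at h₂
    exact this h.symm hy.symm hV h₁ h₂ (hy.lt_or_gt.resolve_left hlt)
  rw [max_eq_right hlt.le] at h₂
  rw [triDelta, if_neg (by tauto), triCorner, if_pos hlt]
  set S : Set (ℝ × ℝ) := {A, B, (A.1, B.2)}
  have hU : IsOpen {W : ℝ × ℝ | W.1 ∈ uIoo A.1 B.1 ∧ lineAt A B W.1 < W.2 ∧ W.2 < B.2} :=
    (isOpen_Ioo.preimage continuous_fst).inter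
      ((isOpen_lt (by fun_prop) continuous_snd).inter (isOpen_lt continuous_snd continuous_const))
  refine interior_maximal ?_ hU ⟨hV, h₁, h₂⟩
  rintro W ⟨hW, hW₁, hW₂⟩
  -- `W` lies on the vertical segment from the hypotenuse `AB` up to the leg at height `B.2`
  have hbot : (W.1, lineAt A B W.1) ∈ convexHull ℝ S :=
    segment_subset_convexHull (by simp [S]) (by simp [S])
      ((mem_segment_iff_lineAt h).2 ⟨Ioo_subset_Icc_self hW, rfl⟩)
  have htop : (W.1, B.2) ∈ convexHull ℝ S := by
    refine segment_subset_convexHull (x := (A.1, B.2)) (y := B) (by simp [S]) (by simp [S]) ?_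
    rw [← Prod.image_mk_segment_left, segment_eq_uIcc]
    exact ⟨W.1, Ioo_subset_Icc_self hW, rfl⟩
  refine (convex_convexHull ℝ S).segment_subset hbot htop ?_
  exact (mem_segment_iff_of_fst_eq (A := (W.1, lineAt A B W.1)) (B := (W.1, B.2)) rfl).2
    ⟨rfl, mem_uIcc_of_le hW₁.le hW₂.le⟩

end lineAt

section chord

variable {f : ℝ → ℝ} {A B V : ℝ × ℝ}

local notation "φ" => Prod.map id f

lemma lineAt_map_fst_of_mem (h : A.1 ≠ B.1) (hV : V ∈ ({A, B} : Set (ℝ × ℝ))) :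
    lineAt (φ A) (φ B) V.1 = f V.2 := by
  rcases hV with rfl | rfl
  exacts [lineAt_fst_left, lineAt_fst_right h]

lemma map_lineAt_le (hf : ConvexOn ℝ univ f) (h : A.1 ≠ B.1) {x : ℝ}
    (hx : x ∈ uIcc A.1 B.1) : f (lineAt A B x) ≤ lineAt (φ A) (φ B) x := by
  rw [← segment_eq_uIcc] at hx
  obtain ⟨a, b, ha, hb, hab, rfl⟩ := hx
  simp only [smul_eq_mul]
  rw [lineAt_combo h hab]
  exact (hf.2 trivial trivial ha hb hab).trans_eq
    (lineAt_combo (A := φ A) (B := φ B) h hab).symm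

lemma mem_segment_union_triDelta_of_le (hmono : StrictMono f) (h : A.1 ≠ B.1)
    (hV : V.1 ∈ uIcc A.1 B.1) (h₁ : lineAt A B V.1 ≤ V.2)
    (h₂ : f V.2 ≤ lineAt (φ A) (φ B) V.1) :
    V ∈ segment ℝ A B ∪ triDelta A B := by
  rcases h₁.eq_or_lt with h₁ | h₁
  · exact Or.inl ((mem_segment_iff_lineAt h).2 ⟨hV, h₁.symm⟩)
  right
  -- wherever the chord's height is `f` of the segment's height, `h₁` and `h₂` clash
  have hchord : lineAt (φ A) (φ B) V.1 ≠ f (lineAt A B V.1) := by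
    intro he; rw [he, hmono.le_iff_le] at h₂; linarith
  have hy : A.2 ≠ B.2 := fun hy => hchord <| by
    rw [lineAt_of_snd_eq hy, lineAt_of_snd_eq (by simp [hy])]; rfl
  have hx : V.1 ∈ uIoo A.1 B.1 := by
    refine mem_uIoo_of_mem_uIcc hV (fun he => hchord ?_) (fun he => hchord ?_) <;> rw [he]
    · rw [lineAt_fst_left, lineAt_map_fst_of_mem (V := A) h (by simp)]
    · rw [lineAt_fst_right h, lineAt_map_fst_of_mem (V := B) h (by simp)]
  refine mem_triDelta_of_lineAt_lt h hy hx h₁ (hmono.lt_iff_lt.1 ?_)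
  rw [hmono.monotone.map_max]
  exact h₂.trans_lt (lineAt_lt_max (A := φ A) (B := φ B) h (hmono.injective.ne hy) hx)

lemma mem_segment_union_triDelta_of_map_mem (hf : ConvexOn ℝ univ f) (hmono : StrictMono f)
    (hV : φ V ∈ segment ℝ (φ A) (φ B)) : V ∈ segment ℝ A B ∪ triDelta A B := by
  by_cases h : A.1 = B.1
  · obtain ⟨h₁, h₂⟩ := (mem_segment_iff_of_fst_eq (A := φ A) (B := φ B) h).1 hV
    refine Or.inl ((mem_segment_iff_of_fst_eq h).2 ⟨h₁, ?_⟩)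
    simpa [mem_uIcc, hmono.le_iff_le] using h₂
  · obtain ⟨h₁, h₂⟩ := (mem_segment_iff_lineAt (A := φ A) (B := φ B) h).1 hV
    refine mem_segment_union_triDelta_of_le hmono h h₁ ?_ h₂.le
    exact hmono.le_iff_le.1 ((map_lineAt_le hf h h₁).trans h₂.ge)

end chord

lemma exists_mem_fst_eq_of_mem_ends {A₁ A₂ A₃ A₄ : ℝ × ℝ} {x : ℝ}
    (hx : x ∈ ({max (min A₁.1 A₂.1) (min A₃.1 A₄.1), min (max A₁.1 A₂.1) (max A₃.1 A₄.1)} :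
      Set ℝ)) :
    ∃ V ∈ ({A₁, A₂} : Set (ℝ × ℝ)) ∪ {A₃, A₄}, V.1 = x := by
  rcases hx with rfl | rfl
  · rcases max_choice (min A₁.1 A₂.1) (min A₃.1 A₄.1) with h | h <;> rw [h] <;>
      [rcases min_choice A₁.1 A₂.1 with h' | h'; rcases min_choice A₃.1 A₄.1 with h' | h'] <;>
      exact ⟨_, by simp, h'.symm⟩
  · rcases min_choice (max A₁.1 A₂.1) (max A₃.1 A₄.1) with h | h <;> rw [h] <;>
      [rcases max_choice A₁.1 A₂.1 with h' | h'; rcases max_choice A₃.1 A₄.1 with h' | h'] <;>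
      exact ⟨_, by simp, h'.symm⟩

structure IsLiftablePlanarPair (A₁ A₂ A₃ A₄ : ℝ × ℝ) : Prop where
  inter_subset : segment ℝ A₁ A₂ ∩ segment ℝ A₃ A₄ ⊆ {A₁, A₂} ∩ {A₃, A₄}
  left_notMem : ∀ V ∈ ({A₁, A₂} : Set (ℝ × ℝ)), V ∉ triDelta A₃ A₄
  right_notMem : ∀ V ∈ ({A₃, A₄} : Set (ℝ × ℝ)), V ∉ triDelta A₁ A₂

namespace IsLiftablePlanarPair

variable {f : ℝ → ℝ} {A₁ A₂ A₃ A₄ ζ : ℝ × ℝ}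

local notation "φ" => Prod.map id f

lemma symm (hP : IsLiftablePlanarPair A₁ A₂ A₃ A₄) : IsLiftablePlanarPair A₃ A₄ A₁ A₂ :=
  ⟨by rw [inter_comm, inter_comm {A₃, A₄}]; exact hP.inter_subset, hP.right_notMem,
    hP.left_notMem⟩

lemma lineAt_le_of_lineAt_lt (hP : IsLiftablePlanarPair A₁ A₂ A₃ A₄) (h₁₂ : A₁.1 ≠ A₂.1)
    (h₃₄ : A₃.1 ≠ A₄.1) {x x₀ : ℝ} (hx : x ∈ uIcc A₁.1 A₂.1 ∩ uIcc A₃.1 A₄.1)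
    (hx₀ : x₀ ∈ uIcc A₁.1 A₂.1 ∩ uIcc A₃.1 A₄.1) (h₀ : lineAt A₃ A₄ x₀ < lineAt A₁ A₂ x₀) :
    lineAt A₃ A₄ x ≤ lineAt A₁ A₂ x := by
  by_contra! hlt
  set d : ℝ → ℝ := fun y => lineAt A₁ A₂ y - lineAt A₃ A₄ y
  obtain ⟨c, hc, hdc⟩ : ∃ c ∈ uIcc x x₀, d c = 0 :=
    intermediate_value_uIcc (by fun_prop : Continuous d).continuousOn
      (mem_uIcc_of_le (by simp only [d]; linarith) (by simp only [d]; linarith))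
  simp only [d] at hdc
  have hc₁ : c ∈ uIcc A₁.1 A₂.1 := uIcc_subset_uIcc hx.1 hx₀.1 hc
  have hc₃ : c ∈ uIcc A₃.1 A₄.1 := uIcc_subset_uIcc hx.2 hx₀.2 hc
  -- the segments meet above `c`, which must then be the abscissa of an endpoint
  have hV := hP.inter_subset (a := (c, lineAt A₁ A₂ c))
    ⟨(mem_segment_iff_lineAt h₁₂).2 ⟨hc₁, rfl⟩, (mem_segment_iff_lineAt h₃₄).2 ⟨hc₃, by linarith⟩⟩
  have hc' : c ∈ uIoo x x₀ :=
    mem_uIoo_of_mem_uIcc hc (by rintro rfl; linarith) (by rintro rfl; linarith)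
  rcases hV.1 with h | h <;> obtain rfl : c = _ := congrArg Prod.fst h
  · exact left_notMem_uIoo_of_mem_uIcc hx.1 hx₀.1 hc'
  · rw [uIcc_comm] at hx hx₀
    exact left_notMem_uIoo_of_mem_uIcc hx.1 hx₀.1 hc'

lemma mem_inter_of_lineAt_le (hP : IsLiftablePlanarPair A₁ A₂ A₃ A₄) (hf : ConvexOn ℝ univ f)
    (hmono : StrictMono f) (h₁₂ : A₁.1 ≠ A₂.1) (h₃₄ : A₃.1 ≠ A₄.1) {V : ℝ × ℝ}
    (hV : V ∈ ({A₁, A₂} : Set (ℝ × ℝ)) ∪ {A₃, A₄}) (hV₁ : V.1 ∈ uIcc A₁.1 A₂.1)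
    (hV₃ : V.1 ∈ uIcc A₃.1 A₄.1) (hh : lineAt A₃ A₄ V.1 ≤ lineAt A₁ A₂ V.1)
    (hg : lineAt (φ A₁) (φ A₂) V.1 ≤ lineAt (φ A₃) (φ A₄) V.1) :
    V ∈ ({A₁, A₂} : Set (ℝ × ℝ)) ∩ {A₃, A₄} := by
  rcases hV with hV | hV
  · rw [lineAt_fst_of_mem h₁₂ hV] at hh
    rw [lineAt_map_fst_of_mem h₁₂ hV] at hg
    rcases mem_segment_union_triDelta_of_le hmono h₃₄ hV₃ hh hg with h | h
    exacts [hP.inter_subset ⟨mem_segment_of_mem_pair hV, h⟩, absurd h (hP.left_notMem V hV)]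
  · rw [lineAt_fst_of_mem h₃₄ hV] at hh
    rw [lineAt_map_fst_of_mem h₃₄ hV] at hg
    have h₁ : lineAt A₁ A₂ V.1 ≤ V.2 := hmono.le_iff_le.1 ((map_lineAt_le hf h₁₂ hV₁).trans hg)
    exact hP.inter_subset ⟨(mem_segment_iff_lineAt h₁₂).2 ⟨hV₁, (h₁.antisymm hh).symm⟩,
      mem_segment_of_mem_pair hV⟩

lemma lineAt_eq_of_mem_ends (hP : IsLiftablePlanarPair A₁ A₂ A₃ A₄) (hf : ConvexOn ℝ univ f)
    (hmono : StrictMono f) (h₁₂ : A₁.1 ≠ A₂.1) (h₃₄ : A₃.1 ≠ A₄.1) {x₀ x : ℝ}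
    (hx₀ : x₀ ∈ uIcc A₁.1 A₂.1 ∩ uIcc A₃.1 A₄.1) (hh : lineAt A₃ A₄ x₀ < lineAt A₁ A₂ x₀)
    (hx : x ∈ ({max (min A₁.1 A₂.1) (min A₃.1 A₄.1), min (max A₁.1 A₂.1) (max A₃.1 A₄.1)} :
      Set ℝ))
    (hg : lineAt (φ A₁) (φ A₂) x ≤ lineAt (φ A₃) (φ A₄) x) :
    lineAt A₁ A₂ x = lineAt A₃ A₄ x ∧ lineAt (φ A₁) (φ A₂) x = lineAt (φ A₃) (φ A₄) x := by
  have hx' : x ∈ uIcc A₁.1 A₂.1 ∩ uIcc A₃.1 A₄.1 := by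
    rcases hx with rfl | rfl
    · exact ⟨⟨le_max_left _ _, (max_le hx₀.1.1 hx₀.2.1).trans hx₀.1.2⟩,
        ⟨le_max_right _ _, (max_le hx₀.1.1 hx₀.2.1).trans hx₀.2.2⟩⟩
    · exact ⟨⟨hx₀.1.1.trans (le_min hx₀.1.2 hx₀.2.2), min_le_left _ _⟩,
        ⟨hx₀.2.1.trans (le_min hx₀.1.2 hx₀.2.2), min_le_right _ _⟩⟩
  obtain ⟨V, hV, rfl⟩ := exists_mem_fst_eq_of_mem_ends hx
  have hV' := hP.mem_inter_of_lineAt_le hf hmono h₁₂ h₃₄ hV hx'.1 hx'.2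
    (hP.lineAt_le_of_lineAt_lt h₁₂ h₃₄ hx' hx₀ hh) hg
  rw [lineAt_fst_of_mem h₁₂ hV'.1, lineAt_fst_of_mem h₃₄ hV'.2,
    lineAt_map_fst_of_mem h₁₂ hV'.1, lineAt_map_fst_of_mem h₃₄ hV'.2]
  exact ⟨rfl, rfl⟩

lemma false_of_lineAt_lt (hP : IsLiftablePlanarPair A₁ A₂ A₃ A₄) (hf : ConvexOn ℝ univ f)
    (hmono : StrictMono f) (h₁₂ : A₁.1 ≠ A₂.1) (h₃₄ : A₃.1 ≠ A₄.1) {x₀ : ℝ}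
    (hx₀ : x₀ ∈ uIcc A₁.1 A₂.1 ∩ uIcc A₃.1 A₄.1)
    (hg : lineAt (φ A₁) (φ A₂) x₀ = lineAt (φ A₃) (φ A₄) x₀)
    (hh : lineAt A₃ A₄ x₀ < lineAt A₁ A₂ x₀) : False := by
  set l := max (min A₁.1 A₂.1) (min A₃.1 A₄.1)
  set r := min (max A₁.1 A₂.1) (max A₃.1 A₄.1)
  have hends := fun x hx => hP.lineAt_eq_of_mem_ends hf hmono h₁₂ h₃₄ hx₀ hh (x := x) hx
  have hlx : l < x₀ := (max_le hx₀.1.1 hx₀.2.1).lt_of_ne fun he =>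
    hh.ne' (hends x₀ (by simp [he]) hg.le).1
  have hxr : x₀ < r := (le_min hx₀.1.2 hx₀.2.2).lt_of_ne fun he =>
    hh.ne' (hends x₀ (by simp [he]) hg.le).1
  have hg_aff : (r - x₀) * (lineAt (φ A₁) (φ A₂) l - lineAt (φ A₃) (φ A₄) l) +
      (x₀ - l) * (lineAt (φ A₁) (φ A₂) r - lineAt (φ A₃) (φ A₄) r) = 0 := by
    linear_combination sub_mul_lineAt (φ A₃) (φ A₄) l x₀ r -
      sub_mul_lineAt (φ A₁) (φ A₂) l x₀ r + (r - l) * hg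
  have hh_aff : (r - l) * (lineAt A₁ A₂ x₀ - lineAt A₃ A₄ x₀) =
      (r - x₀) * (lineAt A₁ A₂ l - lineAt A₃ A₄ l) +
      (x₀ - l) * (lineAt A₁ A₂ r - lineAt A₃ A₄ r) := by
    linear_combination sub_mul_lineAt A₁ A₂ l x₀ r - sub_mul_lineAt A₃ A₄ l x₀ r
  have hgl_le : lineAt (φ A₁) (φ A₂) l ≤ lineAt (φ A₃) (φ A₄) l := by
    by_contra! hgl
    have := (hends r (.inr rfl) (by nlinarith)).2
    nlinarith
  obtain ⟨hhl, hgl⟩ := hends l (.inl rfl) hgl_le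
  obtain ⟨hhr, -⟩ := hends r (.inr rfl) (by nlinarith)
  nlinarith

lemma mem_image_of_fst_ne (hP : IsLiftablePlanarPair A₁ A₂ A₃ A₄)
    (hf : ConvexOn ℝ univ f) (hmono : StrictMono f) (h₁₂ : A₁.1 ≠ A₂.1) (h₃₄ : A₃.1 ≠ A₄.1)
    (hζ₁ : ζ ∈ segment ℝ (φ A₁) (φ A₂)) (hζ₃ : ζ ∈ segment ℝ (φ A₃) (φ A₄)) :
    ζ ∈ φ '' ({A₁, A₂} ∩ {A₃, A₄}) := by
  obtain ⟨hx₁, hy₁⟩ := (mem_segment_iff_lineAt (A := φ A₁) (B := φ A₂) h₁₂).1 hζ₁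
  obtain ⟨hx₃, hy₃⟩ := (mem_segment_iff_lineAt (A := φ A₃) (B := φ A₄) h₃₄).1 hζ₃
  rcases lt_trichotomy (lineAt A₁ A₂ ζ.1) (lineAt A₃ A₄ ζ.1) with h | h | h
  · exact (hP.symm.false_of_lineAt_lt hf hmono h₃₄ h₁₂ ⟨hx₃, hx₁⟩ (hy₃.symm.trans hy₁) h).elim
  · set V : ℝ × ℝ := (ζ.1, lineAt A₁ A₂ ζ.1)
    have hV := hP.inter_subset (a := V)
      ⟨(mem_segment_iff_lineAt h₁₂).2 ⟨hx₁, rfl⟩, (mem_segment_iff_lineAt h₃₄).2 ⟨hx₃, h⟩⟩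
    exact ⟨V, hV, Prod.ext rfl (hy₁.trans (lineAt_map_fst_of_mem (V := V) h₁₂ hV.1)).symm⟩
  · exact (hP.false_of_lineAt_lt hf hmono h₁₂ h₃₄ ⟨hx₁, hx₃⟩ (hy₁.symm.trans hy₃) h).elim

lemma mem_image_of_fst_eq (hP : IsLiftablePlanarPair A₁ A₂ A₃ A₄)
    (hf : ConvexOn ℝ univ f) (hmono : StrictMono f) (h₁₂ : A₁.1 = A₂.1) (h₃₄ : A₃.1 ≠ A₄.1)
    (hζ₁ : ζ ∈ segment ℝ (φ A₁) (φ A₂)) (hζ₃ : ζ ∈ segment ℝ (φ A₃) (φ A₄)) :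
    ζ ∈ φ '' ({A₁, A₂} ∩ {A₃, A₄}) := by
  obtain ⟨hx₁, hy₁⟩ := (mem_segment_iff_of_fst_eq (A := φ A₁) (B := φ A₂) h₁₂).1 hζ₁
  obtain ⟨hx₃, hy₃⟩ := (mem_segment_iff_lineAt (A := φ A₃) (B := φ A₄) h₃₄).1 hζ₃
  set y := lineAt A₃ A₄ ζ.1
  have hfy : f y ≤ ζ.2 := hy₃ ▸ map_lineAt_le hf h₃₄ hx₃
  by_cases hy : min A₁.2 A₂.2 ≤ y
  · have hymax : y ≤ max A₁.2 A₂.2 := by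
      rw [← hmono.le_iff_le, hmono.monotone.map_max]; exact hfy.trans hy₁.2
    have hV := hP.inter_subset (a := (ζ.1, y)) ⟨(mem_segment_iff_of_fst_eq h₁₂).2
      ⟨hx₁, hy, hymax⟩, (mem_segment_iff_lineAt h₃₄).2 ⟨hx₃, rfl⟩⟩
    exact ⟨_, hV, Prod.ext rfl (hy₃.trans (lineAt_map_fst_of_mem (V := (ζ.1, y)) h₃₄ hV.2)).symm⟩
  -- otherwise the lower end of the vertical edge lies above the other segment, below its chord
  exfalso
  obtain ⟨V, hV, hV₁, hV₂⟩ :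
      ∃ V ∈ ({A₁, A₂} : Set (ℝ × ℝ)), V.1 = ζ.1 ∧ V.2 = min A₁.2 A₂.2 := by
    rcases min_choice A₁.2 A₂.2 with h | h
    exacts [⟨A₁, by simp, hx₁.symm, h.symm⟩, ⟨A₂, by simp, h₁₂.symm.trans hx₁.symm, h.symm⟩]
  have hfV : f V.2 ≤ lineAt (φ A₃) (φ A₄) V.1 := by
    rw [hV₁, ← hy₃, hV₂, hmono.monotone.map_min]; exact hy₁.1
  rcases mem_segment_union_triDelta_of_le hmono h₃₄ (hV₁ ▸ hx₃)
    (by rw [hV₁, hV₂]; exact (not_le.1 hy).le) hfV with h | h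
  · have := ((mem_segment_iff_lineAt h₃₄).1 h).2
    rw [hV₁, hV₂] at this; exact hy this.le
  · exact hP.left_notMem V hV h

lemma mem_image_of_fst_eq_of_fst_eq (hP : IsLiftablePlanarPair A₁ A₂ A₃ A₄)
    (hmono : StrictMono f) (h₁₂ : A₁.1 = A₂.1) (h₃₄ : A₃.1 = A₄.1)
    (hζ₁ : ζ ∈ segment ℝ (φ A₁) (φ A₂)) (hζ₃ : ζ ∈ segment ℝ (φ A₃) (φ A₄)) :
    ζ ∈ φ '' ({A₁, A₂} ∩ {A₃, A₄}) := by
  obtain ⟨hx₁, hy₁⟩ := (mem_segment_iff_of_fst_eq (A := φ A₁) (B := φ A₂) h₁₂).1 hζ₁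
  obtain ⟨hx₃, hy₃⟩ := (mem_segment_iff_of_fst_eq (A := φ A₃) (B := φ A₄) h₃₄).1 hζ₃
  set lo := max (min A₁.2 A₂.2) (min A₃.2 A₄.2)
  set hi := min (max A₁.2 A₂.2) (max A₃.2 A₄.2)
  have hlo : f lo ≤ ζ.2 := by
    simp only [lo, hmono.monotone.map_max, hmono.monotone.map_min]; exact max_le hy₁.1 hy₃.1
  have hhi : ζ.2 ≤ f hi := by
    simp only [hi, hmono.monotone.map_max, hmono.monotone.map_min]; exact le_min hy₁.2 hy₃.2
  have hmem : ∀ y ∈ Icc lo hi, (ζ.1, y) ∈ ({A₁, A₂} : Set (ℝ × ℝ)) ∩ {A₃, A₄} := fun y hy =>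
    hP.inter_subset ⟨(mem_segment_iff_of_fst_eq h₁₂).2
      ⟨hx₁, (le_max_left _ _).trans hy.1, hy.2.trans (min_le_left _ _)⟩,
      (mem_segment_iff_of_fst_eq h₃₄).2
      ⟨hx₃, (le_max_right _ _).trans hy.1, hy.2.trans (min_le_right _ _)⟩⟩
  rcases (hmono.le_iff_le.1 (hlo.trans hhi)).eq_or_lt with he | hlt
  · exact ⟨_, hmem lo ⟨le_rfl, he.le⟩, Prod.ext rfl (hlo.antisymm (he ▸ hhi))⟩
  -- the midpoint of the common vertical segment would be an endpoint
  exfalso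
  have hy : (lo + hi) / 2 ∈ Icc lo hi := ⟨by linarith, by linarith⟩
  have hlo₁ : min A₁.2 A₂.2 < (lo + hi) / 2 := by
    linarith [le_max_left (min A₁.2 A₂.2) (min A₃.2 A₄.2)]
  have hhi₁ : (lo + hi) / 2 < max A₁.2 A₂.2 := by
    linarith [min_le_left (max A₁.2 A₂.2) (max A₃.2 A₄.2)]
  rcases (hmem _ hy).1 with h | h <;> rw [← h] at hlo₁ hhi₁ <;>
    simp only [min_lt_iff, lt_max_iff, lt_self_iff_false, false_or, or_false] at hlo₁ hhi₁ <;>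
    linarith

theorem map_segment_inter (hP : IsLiftablePlanarPair A₁ A₂ A₃ A₄) (hf : ConvexOn ℝ univ f)
    (hmono : StrictMono f) :
    segment ℝ (φ A₁) (φ A₂) ∩ segment ℝ (φ A₃) (φ A₄) = φ '' ({A₁, A₂} ∩ {A₃, A₄}) := by
  refine Subset.antisymm ?_ ?_
  · rintro ζ ⟨hζ₁, hζ₃⟩
    by_cases h₁₂ : A₁.1 = A₂.1 <;> by_cases h₃₄ : A₃.1 = A₄.1
    · exact hP.mem_image_of_fst_eq_of_fst_eq hmono h₁₂ h₃₄ hζ₁ hζ₃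
    · exact hP.mem_image_of_fst_eq hf hmono h₁₂ h₃₄ hζ₁ hζ₃
    · rw [inter_comm]; exact hP.symm.mem_image_of_fst_eq hf hmono h₃₄ h₁₂ hζ₃ hζ₁
    · exact hP.mem_image_of_fst_ne hf hmono h₁₂ h₃₄ hζ₁ hζ₃
  · rintro _ ⟨V, ⟨hV₁, hV₃⟩, rfl⟩
    have hmap : ∀ {B C : ℝ × ℝ}, V ∈ ({B, C} : Set (ℝ × ℝ)) → φ V ∈ ({φ B, φ C} : Set (ℝ × ℝ)) :=
      fun hV => by rw [← image_pair]; exact mem_image_of_mem _ hV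
    exact ⟨mem_segment_of_mem_pair (hmap hV₁), mem_segment_of_mem_pair (hmap hV₃)⟩

end IsLiftablePlanarPair

theorem stmt_4_general (V : Type*) (G : SimpleGraph V)
    (p : V → ℤ × ℤ) (hp : Function.Injective p)
    (P : V → ℝ × ℝ) (hP : ∀ v : V, P v = (((p v).1 : ℝ), ((p v).2 : ℝ)))
    -- planarity: no vertex on the open part of an edge
    (hvertex : ∀ u v : V, G.Adj u v → ∀ w : V, w ≠ u → w ≠ v →
      P w ∉ segment ℝ (P u) (P v))
    -- planarity: distinct edges sharing no vertex have disjoint segments,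
    -- and edges sharing exactly one vertex meet exactly in its image
    (hdisj : ∀ u v a b : V, G.Adj u v → G.Adj a b → ({u, v} : Set V) ≠ {a, b} →
      (({u, v} : Set V) ∩ {a, b} = ∅ →
        segment ℝ (P u) (P v) ∩ segment ℝ (P a) (P b) = ∅) ∧
      (∀ z : V, ({u, v} : Set V) ∩ {a, b} = {z} →
        segment ℝ (P u) (P v) ∩ segment ℝ (P a) (P b) = {P z}))
    -- liftability
    (hlift : ∀ u v : V, G.Adj u v → ∀ w : V, P w ∉ triDelta (P u) (P v))
    (f : ℝ → ℝ)
    (hconv : ∀ t : ℝ, 0 < t → t < 1 → ∀ a b : ℝ, a ≠ b →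
      f (t * a + (1 - t) * b) < t * f a + (1 - t) * f b)
    (hmono : StrictMono f)
    (q : V → ℝ × ℝ) (hq : ∀ v : V, q v = (((p v).1 : ℝ), f ((p v).2 : ℝ))) :
    (∀ u v : V, G.Adj u v → ∀ w : V, w ≠ u → w ≠ v →
      q w ∉ segment ℝ (q u) (q v)) ∧
    (∀ u v a b : V, G.Adj u v → G.Adj a b → ({u, v} : Set V) ≠ {a, b} →
      (({u, v} : Set V) ∩ {a, b} = ∅ →
        segment ℝ (q u) (q v) ∩ segment ℝ (q a) (q b) = ∅) ∧
      (∀ z : V, ({u, v} : Set V) ∩ {a, b} = {z} →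
        segment ℝ (q u) (q v) ∩ segment ℝ (q a) (q b) = {q z})) := by
  have hPinj : Function.Injective P := fun x y hxy => hp <| by
    rw [hP x, hP y, Prod.mk.injEq] at hxy
    exact Prod.ext (by exact_mod_cast hxy.1) (by exact_mod_cast hxy.2)
  have hqP : q = Prod.map id f ∘ P := funext fun v => by rw [hq, Function.comp_apply, hP]; rfl
  have hf : ConvexOn ℝ univ f := StrictConvexOn.convexOn
    ⟨convex_univ, fun x _ y _ hxy a b ha hb hab => by
      obtain rfl : b = 1 - a := by linarith
      exact hconv a ha (by linarith) x y hxy⟩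
  refine ⟨fun u v huv w hwu hwv hw => ?_, fun u v a b huv hab hne => ?_⟩
  · rw [hqP] at hw
    rcases mem_segment_union_triDelta_of_map_mem hf hmono hw with h | h
    exacts [hvertex u v huv w hwu hwv h, hlift u v huv w h]
  have hshared : ({P u, P v} : Set (ℝ × ℝ)) ∩ {P a, P b} = P '' ({u, v} ∩ {a, b}) := by
    rw [image_inter hPinj, image_pair, image_pair]
  have hinter : segment ℝ (P u) (P v) ∩ segment ℝ (P a) (P b) = P '' ({u, v} ∩ {a, b}) →
      segment ℝ (q u) (q v) ∩ segment ℝ (q a) (q b) = q '' ({u, v} ∩ {a, b}) := fun h => by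
    rw [hqP, image_comp, ← hshared]
    refine IsLiftablePlanarPair.map_segment_inter ⟨h.trans_subset hshared.ge, ?_, ?_⟩ hf hmono
    · rintro _ (rfl | rfl) <;> exact hlift a b hab _
    · rintro _ (rfl | rfl) <;> exact hlift u v huv _
  obtain ⟨hd₁, hd₂⟩ := hdisj u v a b huv hab hne
  refine ⟨fun h => ?_, fun z hz => ?_⟩
  · rw [hinter (by rw [hd₁ h, h, image_empty]), h, image_empty]
  · rw [hinter (by rw [hd₂ z hz, hz, image_singleton]), hz, image_singleton]

/-- A planar liftable straight-line grid drawing remains planar after the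
transformation (x, y) ↦ (x, f y) by a strictly convex, strictly increasing function f. -/
theorem stmt_4 (V : Type*) [Fintype V] (G : SimpleGraph V)
    (p : V → ℤ × ℤ) (hp : Function.Injective p)
    (P : V → ℝ × ℝ) (hP : ∀ v : V, P v = (((p v).1 : ℝ), ((p v).2 : ℝ)))
    -- planarity: no vertex on the open part of an edge
    (hvertex : ∀ u v : V, G.Adj u v → ∀ w : V, w ≠ u → w ≠ v →
      P w ∉ segment ℝ (P u) (P v))
    -- planarity: distinct edges sharing no vertex have disjoint segments,
    -- and edges sharing exactly one vertex meet exactly in its image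
    (hdisj : ∀ u v a b : V, G.Adj u v → G.Adj a b → ({u, v} : Set V) ≠ {a, b} →
      (({u, v} : Set V) ∩ {a, b} = ∅ →
        segment ℝ (P u) (P v) ∩ segment ℝ (P a) (P b) = ∅) ∧
      (∀ z : V, ({u, v} : Set V) ∩ {a, b} = {z} →
        segment ℝ (P u) (P v) ∩ segment ℝ (P a) (P b) = {P z}))
    -- liftability
    (hlift : ∀ u v : V, G.Adj u v → ∀ w : V, P w ∉ triDelta (P u) (P v))
    (f : ℝ → ℝ)
    (hconv : ∀ t : ℝ, 0 < t → t < 1 → ∀ a b : ℝ, a ≠ b →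
      f (t * a + (1 - t) * b) < t * f a + (1 - t) * f b)
    (hmono : StrictMono f)
    (q : V → ℝ × ℝ) (hq : ∀ v : V, q v = (((p v).1 : ℝ), f ((p v).2 : ℝ))) :
    (∀ u v : V, G.Adj u v → ∀ w : V, w ≠ u → w ≠ v →
      q w ∉ segment ℝ (q u) (q v)) ∧
    (∀ u v a b : V, G.Adj u v → G.Adj a b → ({u, v} : Set V) ≠ {a, b} →
      (({u, v} : Set V) ∩ {a, b} = ∅ →
        segment ℝ (q u) (q v) ∩ segment ℝ (q a) (q b) = ∅) ∧
      (∀ z : V, ({u, v} : Set V) ∩ {a, b} = {z} →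
        segment ℝ (q u) (q v) ∩ segment ℝ (q a) (q b) = {q z})) :=
  stmt_4_general V G p hp P hP hvertex hdisj hlift f hconv hmono q hq
end
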